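/- arXiv:1706.00643 — 2 statements merged into one kernel-verified Lean document; each statement's English description precedes it below -/
import Mathlib

section
/- Let A be an n×n matrix over the max-plus algebra satisfying Tr(A) ≤ 𝟙, and let u ∈ ℝⁿ be a regular vector. Then x = A* u is a regular vector satisfying A x ≤ x. -/
open Finset

/-- The max-plus identity matrix: `0` on the diagonal, `-∞` elsewhere. -/
noncomputable def mpId (n : ℕ) : Fin n → Fin n → WithBot ℝ :=
  fun i j => if i = j then ((0 : ℝ) : WithBot ℝ) else ⊥

/-- Max-plus matrix multiplication. -/
noncomputable def mpMul {n : ℕ} (A B : Fin n → Fin n → WithBot ℝ) :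
    Fin n → Fin n → WithBot ℝ :=
  fun i j => univ.sup fun k => A i k + B k j

/-- Max-plus matrix power. -/
noncomputable def mpPow {n : ℕ} (A : Fin n → Fin n → WithBot ℝ) :
    ℕ → Fin n → Fin n → WithBot ℝ
  | 0 => mpId n
  | m + 1 => mpMul A (mpPow A m)

/-- Max-plus trace: the maximum diagonal entry. -/
noncomputable def mpTr {n : ℕ} (A : Fin n → Fin n → WithBot ℝ) : WithBot ℝ :=
  univ.sup fun i => A i i

/-- The Kleene star `A* = I ⊕ A ⊕ ⋯ ⊕ A^(n-1)`. -/
noncomputable def mpStar {n : ℕ} (A : Fin n → Fin n → WithBot ℝ) :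
    Fin n → Fin n → WithBot ℝ :=
  fun i j => (range n).sup fun m => mpPow A m i j

/-- Conjugate transpose: entry `(i,j)` is `-a_{ji}` if `a_{ji} ≠ -∞`, else `-∞`. -/
noncomputable def mpConj {m n : ℕ} (A : Fin m → Fin n → WithBot ℝ) :
    Fin n → Fin m → WithBot ℝ :=
  fun i j => WithBot.map (fun a => -a) (A j i)

/-- Max-plus matrix-vector product. -/
noncomputable def mpMulVec {n : ℕ} (A : Fin n → Fin n → WithBot ℝ)
    (x : Fin n → WithBot ℝ) : Fin n → WithBot ℝ :=
  fun i => univ.sup fun j => A i j + x j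

/-!
Entries of max-plus powers are maximal weights of walks: `(A ^ m) i k` is the largest weight of a
walk of length `m` from `i` to `k`. A walk of length `n` on `n` vertices revisits a vertex, so it
splits into a shorter walk and a closed walk of some length `c ≤ n`, whose weight is at most
`tr (A ^ c) ≤ 0`. Hence `A ^ n ≤ A*`, so `A ⊗ A* ≤ A*`, and `x = A* u` satisfies `A x ≤ x`;
it is regular because `A* ≥ I`.
-/

theorem WithBot.add_finset_sup {α ι : Type*} [AddCommMonoid α] [LinearOrder α]
    [IsOrderedAddMonoid α] (s : Finset ι) (f : ι → WithBot α) (c : WithBot α) :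
    c + s.sup f = s.sup fun j => c + f j :=
  apply_sup_eq_sup_comp (c + ·) (fun _ _ => (monotone_id.const_add c).map_max) (by simp)

section Walks

variable {n : ℕ} (A : Fin n → Fin n → WithBot ℝ)

/-- A walk of length `m` is encoded as `f : ℕ → Fin n`, of which only `f 0, …, f m` matter. -/
noncomputable def walkWeight (f : ℕ → Fin n) (m : ℕ) : WithBot ℝ :=
  ∑ t ∈ range m, A (f t) (f (t + 1))

theorem walkWeight_add (f : ℕ → Fin n) (p q : ℕ) :
    walkWeight A f (p + q) = walkWeight A f p + walkWeight A (fun t => f (p + t)) q :=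
  sum_range_add _ p q

theorem walkWeight_le_mpPow (m : ℕ) (f : ℕ → Fin n) :
    walkWeight A f m ≤ mpPow A m (f 0) (f m) := by
  induction m generalizing f with
  | zero => simp [walkWeight, mpPow, mpId]
  | succ m ih =>
    calc walkWeight A f (m + 1)
        = A (f 0) (f 1) + walkWeight A (fun t => f (t + 1)) m := by
          rw [add_comm m, walkWeight_add]
          simp [walkWeight, add_comm 1]
      _ ≤ A (f 0) (f 1) + mpPow A m (f 1) (f (m + 1)) := by grw [ih]
      _ ≤ mpPow A (m + 1) (f 0) (f (m + 1)) :=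
          le_sup (f := fun j => A (f 0) j + mpPow A m j (f (m + 1))) (mem_univ _)

theorem exists_walk_of_mpPow_ne_bot {m : ℕ} {i k : Fin n} (h : mpPow A m i k ≠ ⊥) :
    ∃ f : ℕ → Fin n, f 0 = i ∧ f m = k ∧ mpPow A m i k ≤ walkWeight A f m := by
  induction m generalizing i with
  | zero =>
    obtain rfl : i = k := by
      by_contra hik
      exact h (by simp [mpPow, mpId, hik])
    exact ⟨fun _ => i, rfl, rfl, by simp [mpPow, mpId, walkWeight]⟩
  | succ m ih =>
    obtain ⟨j, -, hj⟩ := exists_mem_eq_sup univ ⟨i, mem_univ i⟩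
      fun j => A i j + mpPow A m j k
    have hEq : mpPow A (m + 1) i k = A i j + mpPow A m j k := hj
    obtain ⟨g, rfl, rfl, hg⟩ := ih (i := j) fun hbot => h (by simp [hEq, hbot])
    refine ⟨fun t => if t = 0 then i else g (t - 1), rfl, rfl, ?_⟩
    rw [hEq, walkWeight, sum_range_succ', add_comm]
    simpa [walkWeight] using add_le_add_left hg (A i (g 0))

end Walks

section Powers

variable {n : ℕ} (A : Fin n → Fin n → WithBot ℝ)

theorem mpPow_add_le (p q : ℕ) (i j k : Fin n) :
    mpPow A p i j + mpPow A q j k ≤ mpPow A (p + q) i k := by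
  induction p generalizing i with
  | zero =>
    by_cases h : i = j
    · subst h; simp [mpPow, mpId]
    · simp [mpPow, mpId, h]
  | succ p ih =>
    rw [Nat.add_right_comm]
    change mpMul A (mpPow A p) i j + _ ≤ mpMul A (mpPow A (p + q)) i k
    rw [mpMul, add_comm, WithBot.add_finset_sup]
    refine Finset.sup_le fun l _ => ?_
    calc mpPow A q j k + (A i l + mpPow A p l j)
        = A i l + (mpPow A p l j + mpPow A q j k) := by abel
      _ ≤ A i l + mpPow A (p + q) l k := by grw [ih]
      _ ≤ _ := le_sup (f := fun l => A i l + mpPow A (p + q) l k) (mem_univ l)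

theorem mpPow_le_mpStar_of_lt {m : ℕ} (hm : m < n) (i k : Fin n) :
    mpPow A m i k ≤ mpStar A i k :=
  le_sup (f := fun m => mpPow A m i k) (mem_range.2 hm)

theorem exists_cycle_of_fin (f : ℕ → Fin n) :
    ∃ a c d : ℕ, 0 < c ∧ a + c + d = n ∧ f a = f (a + c) := by
  obtain ⟨a, ha, b, hb, hab, hfab⟩ := exists_ne_map_eq_of_card_lt_of_maps_to
    (s := range (n + 1)) (t := univ) (by simp) fun t _ => mem_univ (f t)
  rw [mem_range] at ha hb
  rcases lt_or_gt_of_ne hab with hlt | hlt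
  · exact ⟨a, b - a, n - b, by omega, by omega, by rw [Nat.add_sub_cancel' hlt.le, hfab]⟩
  · exact ⟨b, a - b, n - a, by omega, by omega, by rw [Nat.add_sub_cancel' hlt.le, hfab]⟩

variable (hTr : ∀ m : ℕ, 1 ≤ m → m ≤ n → mpTr (mpPow A m) ≤ ((0 : ℝ) : WithBot ℝ))
include hTr

theorem walkWeight_le_zero_of_cycle {c : ℕ} (hc : 0 < c) (hcn : c ≤ n) {f : ℕ → Fin n}
    (hf : f 0 = f c) : walkWeight A f c ≤ 0 :=
  calc walkWeight A f c ≤ mpPow A c (f 0) (f 0) := hf ▸ walkWeight_le_mpPow A c f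
    _ ≤ mpTr (mpPow A c) := le_sup (f := fun l => mpPow A c l l) (mem_univ _)
    _ ≤ 0 := hTr c hc hcn

theorem mpPow_le_mpStar (i k : Fin n) : mpPow A n i k ≤ mpStar A i k := by
  by_cases h : mpPow A n i k = ⊥
  · simp [h]
  obtain ⟨f, rfl, rfl, hf⟩ := exists_walk_of_mpPow_ne_bot A h
  obtain ⟨a, c, d, hc, hn, hcyc⟩ := exists_cycle_of_fin f
  have hend : f (a + c + d) = f n := by rw [hn]
  calc mpPow A n (f 0) (f n) ≤ walkWeight A f (a + c + d) := by rwa [hn]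
    _ = walkWeight A f a + walkWeight A (fun t => f (a + t)) c
          + walkWeight A (fun t => f (a + c + t)) d := by
        simp only [walkWeight_add, add_assoc]
    _ ≤ mpPow A a (f 0) (f a) + 0 + mpPow A d (f a) (f n) := by
        gcongr
        · exact walkWeight_le_mpPow A a f
        · exact walkWeight_le_zero_of_cycle A hTr hc (by omega) (by simpa using hcyc)
        · simpa [hcyc, hend] using walkWeight_le_mpPow A d fun t => f (a + c + t)
    _ ≤ mpPow A (a + d) (f 0) (f n) := by
        simpa using mpPow_add_le A a d (f 0) (f a) (f n)
    _ ≤ mpStar A (f 0) (f n) := mpPow_le_mpStar_of_lt A (by omega) _ _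

theorem add_mpStar_le_mpStar (i j k : Fin n) : A i j + mpStar A j k ≤ mpStar A i k := by
  rw [mpStar, WithBot.add_finset_sup]
  refine Finset.sup_le fun m hm => ?_
  have hstep : A i j + mpPow A m j k ≤ mpPow A (m + 1) i k :=
    le_sup (f := fun l => A i l + mpPow A m l k) (mem_univ j)
  rcases Nat.lt_or_ge (m + 1) n with hlt | hge
  · exact hstep.trans (mpPow_le_mpStar_of_lt A hlt i k)
  · obtain rfl : m + 1 = n := by have := mem_range.1 hm; omega
    exact hstep.trans (mpPow_le_mpStar A hTr i k)

end Powers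

theorem mpMulVec_mpMulVec_le {n : ℕ} {A B : Fin n → Fin n → WithBot ℝ}
    (hAB : ∀ i j k, A i j + B j k ≤ B i k) (v : Fin n → WithBot ℝ) (i : Fin n) :
    mpMulVec A (mpMulVec B v) i ≤ mpMulVec B v i := by
  refine Finset.sup_le fun j _ => ?_
  rw [mpMulVec, WithBot.add_finset_sup]
  refine Finset.sup_le fun k _ => ?_
  calc A i j + (B j k + v k) = A i j + B j k + v k := (add_assoc _ _ _).symm
    _ ≤ B i k + v k := by grw [hAB]
    _ ≤ _ := le_sup (f := fun l => B i l + v l) (mem_univ k)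

theorem le_mpMulVec_mpStar {n : ℕ} (A : Fin n → Fin n → WithBot ℝ) (v : Fin n → WithBot ℝ)
    (i : Fin n) : v i ≤ mpMulVec (mpStar A) v i :=
  calc v i = mpPow A 0 i i + v i := by simp [mpPow, mpId]
    _ ≤ mpStar A i i + v i := by grw [mpPow_le_mpStar_of_lt A i.pos]
    _ ≤ _ := le_sup (f := fun j => mpStar A i j + v j) (mem_univ i)

/-- If `Tr(A) ≤ 𝟙` and `u ∈ ℝⁿ` is regular, then `x = A* u` is a regular
vector satisfying `A x ≤ x`. -/
theorem maxplus_star_u_solves (n : ℕ) (A : Fin n → Fin n → WithBot ℝ)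
    (hTr : ∀ m : ℕ, 1 ≤ m → m ≤ n → mpTr (mpPow A m) ≤ ((0 : ℝ) : WithBot ℝ))
    (u : Fin n → ℝ)
    (x : Fin n → WithBot ℝ)
    (hx : x = mpMulVec (mpStar A) (fun j => ((u j : ℝ) : WithBot ℝ))) :
    (∀ i : Fin n, x i ≠ ⊥) ∧ (∀ i : Fin n, mpMulVec A x i ≤ x i) := by
  subst hx
  refine ⟨fun i => ?_, mpMulVec_mpMulVec_le (add_mpStar_le_mpStar A hTr) _⟩
  exact ne_bot_of_le_ne_bot WithBot.coe_ne_bot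
    (le_mpMulVec_mpStar A (fun j => ((u j : ℝ) : WithBot ℝ)) i)
end

section
/- Let A be an n×n matrix over the max-plus algebra with finite spectral radius λ, and let x = (λ⁻¹A)* u for any regular u ∈ ℝⁿ. Then x is regular and x⁻ A x = λ; hence the minimum of x⁻ A x over regular vectors x equals λ. -/
/-!
Let `B = λ⁻¹A`. Every cycle mean of `A` is at most `λ`, so every cycle of `B` has nonpositive
weight; a walk of length at least `n` can therefore be shortened without losing weight, and
`B^m ≤ B*` for all `m`. Hence `B ⊗ B* ≤ B*`, so `x = B* u` satisfies `B x ≤ x`, which says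
`x⁻ A x ≤ λ`, and `x ≥ u` is regular. Conversely, if `x⁻ A x ≤ c` for a regular `x`, then
`(c⁻¹A) x ≤ x`, hence `(c⁻¹A)^m x ≤ x` for all `m`; comparing diagonal entries gives
`tr (A^m) ≤ m c`, that is `λ ≤ c`.
-/

open Finset

/-- The max-plus spectral radius `λ = max_{1≤m≤n} tr(A^m)/m`. -/
noncomputable def mpLam {n : ℕ} (A : Fin n → Fin n → WithBot ℝ) : WithBot ℝ :=
  (Icc 1 n).sup fun m => WithBot.map (fun a => a / (m : ℝ)) (mpTr (mpPow A m))

/-- The objective `x⁻ A x = max_{i,j} (−x_i + a_{ij} + x_j)`. -/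
noncomputable def mpObj {n : ℕ} (A : Fin n → Fin n → WithBot ℝ)
    (x : Fin n → WithBot ℝ) : WithBot ℝ :=
  univ.sup fun i => univ.sup fun j => WithBot.map (fun a => -a) (x i) + A i j + x j

lemma WithBot.finsetSup_add {ι : Type*} (s : Finset ι) (f : ι → WithBot ℝ) (c : WithBot ℝ) :
    s.sup f + c = s.sup fun i => f i + c :=
  Finset.apply_sup_eq_sup_comp_of_linearOrder (· + c) (fun _ _ h => add_le_add h le_rfl)
    (WithBot.bot_add c)

lemma WithBot.add_finsetSup {ι : Type*} (s : Finset ι) (f : ι → WithBot ℝ) (c : WithBot ℝ) :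
    c + s.sup f = s.sup fun i => c + f i := by
  simp only [add_comm c, WithBot.finsetSup_add]

lemma WithBot.add_coe_neg_le_iff (a b : WithBot ℝ) (c : ℝ) :
    a + ((-c : ℝ) : WithBot ℝ) ≤ b ↔ a ≤ b + c := by
  induction a with
  | bot => simp
  | coe a =>
    induction b with
    | bot => simp [← WithBot.coe_add]
    | coe b => norm_cast; constructor <;> intro <;> linarith

section Powers

variable {n : ℕ} (B : Fin n → Fin n → WithBot ℝ)

lemma mpPow_zero_apply_self (i : Fin n) : mpPow B 0 i i = 0 := by
  simp [mpPow, mpId]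

lemma mpPow_zero_apply_of_ne {i j : Fin n} (h : i ≠ j) : mpPow B 0 i j = ⊥ := by
  simp [mpPow, mpId, h]

lemma mpPow_succ_apply (m : ℕ) (i j : Fin n) :
    mpPow B (m + 1) i j = univ.sup fun k => B i k + mpPow B m k j := rfl

lemma add_mpPow_le_mpPow_succ (m : ℕ) (i k j : Fin n) :
    B i k + mpPow B m k j ≤ mpPow B (m + 1) i j :=
  le_sup (f := fun k => B i k + mpPow B m k j) (mem_univ k)

lemma mpPow_add_mpPow_le (a b : ℕ) (i k j : Fin n) :
    mpPow B a i k + mpPow B b k j ≤ mpPow B (a + b) i j := by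
  induction a generalizing i with
  | zero =>
    by_cases h : i = k
    · subst h
      rw [mpPow_zero_apply_self, zero_add, zero_add]
    · rw [mpPow_zero_apply_of_ne B h, WithBot.bot_add]
      exact bot_le
  | succ a ih =>
    rw [mpPow_succ_apply, WithBot.finsetSup_add, Nat.add_right_comm]
    refine Finset.sup_le fun r _ => ?_
    calc B i r + mpPow B a r k + mpPow B b k j
        ≤ B i r + mpPow B (a + b) r j := by rw [add_assoc]; exact add_le_add le_rfl (ih r)
      _ ≤ mpPow B (a + b + 1) i j := add_mpPow_le_mpPow_succ B _ i r j

end Powers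

section Paths

variable {n : ℕ} (B : Fin n → Fin n → WithBot ℝ)

noncomputable def pathWeight (m : ℕ) (p : ℕ → Fin n) : WithBot ℝ :=
  ∑ t ∈ range m, B (p t) (p (t + 1))

lemma pathWeight_add (a b : ℕ) (p : ℕ → Fin n) :
    pathWeight B (a + b) p = pathWeight B a p + pathWeight B b (fun t => p (a + t)) := by
  simp only [pathWeight, sum_range_add, Nat.add_assoc]

lemma pathWeight_succ (m : ℕ) (p : ℕ → Fin n) :
    pathWeight B (m + 1) p = B (p 0) (p 1) + pathWeight B m (fun t => p (t + 1)) := by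
  rw [pathWeight, sum_range_succ', add_comm]
  rfl

lemma pathWeight_le_mpPow (m : ℕ) (p : ℕ → Fin n) {i j : Fin n} (hi : p 0 = i) (hj : p m = j) :
    pathWeight B m p ≤ mpPow B m i j := by
  subst hi hj
  induction m generalizing p with
  | zero => simp [pathWeight, mpPow_zero_apply_self]
  | succ m ih =>
    rw [pathWeight_succ]
    exact (add_le_add le_rfl (ih _)).trans (add_mpPow_le_mpPow_succ B m _ _ _)

lemma exists_pathWeight_eq_mpPow (m : ℕ) (i j : Fin n) (hb : mpPow B m i j ≠ ⊥) :
    ∃ p : ℕ → Fin n, p 0 = i ∧ p m = j ∧ mpPow B m i j = pathWeight B m p := by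
  induction m generalizing i with
  | zero =>
    obtain rfl : i = j := by_contra fun h => hb (mpPow_zero_apply_of_ne B h)
    exact ⟨fun _ => i, rfl, rfl, by simp [mpPow_zero_apply_self, pathWeight]⟩
  | succ m ih =>
    obtain ⟨k, -, hk⟩ := exists_mem_eq_sup univ ⟨i, mem_univ i⟩
      (fun k => B i k + mpPow B m k j)
    rw [mpPow_succ_apply, hk] at hb ⊢
    obtain ⟨p, hp0, hpm, hpw⟩ := ih k (WithBot.add_ne_bot.1 hb).2
    refine ⟨fun t => Nat.casesOn t i p, rfl, hpm, ?_⟩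
    rw [pathWeight_succ, ← hpw]
    exact congrArg (B i · + _) hp0.symm

end Paths

section SpectralRadius

variable {n : ℕ} (A : Fin n → Fin n → WithBot ℝ)

lemma WithBot.map_div_le_coe_iff {k : ℝ} (hk : 0 < k) (a : WithBot ℝ) (c : ℝ) :
    WithBot.map (· / k) a ≤ (c : WithBot ℝ) ↔ a ≤ ((k * c : ℝ) : WithBot ℝ) := by
  induction a with
  | bot => simp
  | coe a => simp only [WithBot.map_coe, WithBot.coe_le_coe, div_le_iff₀' hk]

lemma mpLam_le_coe_iff (c : ℝ) :
    mpLam A ≤ c ↔ ∀ k ∈ Icc 1 n, mpTr (mpPow A k) ≤ ((k * c : ℝ) : WithBot ℝ) := by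
  refine Finset.sup_le_iff.trans (forall₂_congr fun k hk => ?_)
  have hk : (0 : ℝ) < k := by exact_mod_cast (mem_Icc.1 hk).1
  exact WithBot.map_div_le_coe_iff hk _ c

/-- The matrix `c⁻¹A` of max-plus arithmetic. -/
noncomputable def mpShift (c : ℝ) : Fin n → Fin n → WithBot ℝ :=
  fun i j => WithBot.map (fun a => a - c) (A i j)

lemma mpShift_apply (c : ℝ) (i j : Fin n) : mpShift A c i j = A i j + ((-c : ℝ) : WithBot ℝ) := by
  unfold mpShift
  induction A i j with
  | bot => rfl
  | coe a => simp [sub_eq_add_neg]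

lemma mpPow_mpShift (c : ℝ) (m : ℕ) (i j : Fin n) :
    mpPow (mpShift A c) m i j = mpPow A m i j + ((-(m * c) : ℝ) : WithBot ℝ) := by
  induction m generalizing i j with
  | zero => by_cases h : i = j <;> simp [mpPow, mpId, h]
  | succ m ih =>
    simp only [mpPow_succ_apply, WithBot.finsetSup_add, mpShift_apply, ih]
    refine sup_congr rfl fun k _ => ?_
    rw [add_add_add_comm, ← WithBot.coe_add]
    congr 2
    push_cast
    ring

lemma mpTr_mpPow_mpShift (c : ℝ) (k : ℕ) :
    mpTr (mpPow (mpShift A c) k) = mpTr (mpPow A k) + ((-(k * c) : ℝ) : WithBot ℝ) := by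
  simp only [mpTr, mpPow_mpShift, WithBot.finsetSup_add]

lemma mpLam_mpShift_nonpos_iff (c : ℝ) : mpLam (mpShift A c) ≤ 0 ↔ mpLam A ≤ c := by
  rw [← WithBot.coe_zero, mpLam_le_coe_iff, mpLam_le_coe_iff]
  refine forall₂_congr fun k _ => ?_
  rw [mpTr_mpPow_mpShift, mul_zero, WithBot.coe_zero, WithBot.add_coe_neg_le_iff, zero_add]

end SpectralRadius

lemma Fintype.exists_lt_le_card_apply_eq {α : Type*} [Fintype α] (p : ℕ → α) :
    ∃ s t, s < t ∧ t ≤ Fintype.card α ∧ p s = p t := by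
  obtain ⟨v, w, hvw, hp⟩ :=
    Fintype.exists_ne_map_eq_of_card_lt (fun v : Fin (Fintype.card α + 1) => p v) (by simp)
  rcases lt_or_gt_of_ne (Fin.val_ne_of_ne hvw) with h | h
  · exact ⟨v, w, h, Nat.lt_succ_iff.1 w.isLt, hp⟩
  · exact ⟨w, v, h, Nat.lt_succ_iff.1 v.isLt, hp.symm⟩

section Cycles

variable {n : ℕ} {B : Fin n → Fin n → WithBot ℝ}

lemma mpPow_apply_self_nonpos (hB : mpLam B ≤ 0) {k : ℕ} (hk : k ∈ Icc 1 n) (i : Fin n) :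
    mpPow B k i i ≤ 0 := by
  have htr := (mpLam_le_coe_iff B 0).1 hB k hk
  rw [mul_zero, WithBot.coe_zero] at htr
  exact (le_sup (f := fun i => mpPow B k i i) (mem_univ i)).trans htr

/-- A walk of length `m ≥ n` repeats a vertex; cutting out the cycle in between, whose weight is
nonpositive, gives a shorter walk that is at least as heavy. -/
lemma exists_lt_mpPow_le_mpPow (hB : mpLam B ≤ 0) {m : ℕ} (hm : n ≤ m) (i j : Fin n) :
    ∃ m' < m, mpPow B m i j ≤ mpPow B m' i j := by
  by_cases hb : mpPow B m i j = ⊥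
  · exact ⟨0, by have := i.pos; omega, by simp [hb]⟩
  obtain ⟨p, hp0, hpm, hpw⟩ := exists_pathWeight_eq_mpPow B m i j hb
  obtain ⟨s, t, hst, htn, hpst⟩ := Fintype.exists_lt_le_card_apply_eq p
  rw [Fintype.card_fin] at htn
  have hsplit : pathWeight B m p = pathWeight B s p +
      (pathWeight B (t - s) (fun r => p (s + r)) + pathWeight B (m - t) (fun r => p (t + r))) := by
    conv_lhs => rw [show m = s + ((t - s) + (m - t)) by omega, pathWeight_add, pathWeight_add]
    simp only [← Nat.add_assoc, Nat.add_sub_cancel' hst.le]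
  have hcycle : pathWeight B (t - s) (fun r => p (s + r)) ≤ 0 :=
    (pathWeight_le_mpPow B _ _ rfl (by rw [Nat.add_sub_cancel' hst.le, hpst])).trans
      (mpPow_apply_self_nonpos hB (mem_Icc.2 ⟨by omega, by omega⟩) (p s))
  refine ⟨s + (m - t), by omega, ?_⟩
  calc mpPow B m i j
      = pathWeight B s p + (pathWeight B (t - s) (fun r => p (s + r)) +
          pathWeight B (m - t) (fun r => p (t + r))) := hpw.trans hsplit
    _ ≤ mpPow B s i (p s) + (0 + mpPow B (m - t) (p s) j) :=
        add_le_add (pathWeight_le_mpPow B s p hp0 rfl) (add_le_add hcycle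
          (pathWeight_le_mpPow B _ _ hpst.symm (by rw [Nat.add_sub_cancel' (by omega), hpm])))
    _ ≤ mpPow B (s + (m - t)) i j := by
        rw [zero_add]
        exact mpPow_add_mpPow_le B s (m - t) i (p s) j

lemma mpPow_le_mpStar_s13 (hB : mpLam B ≤ 0) (m : ℕ) (i j : Fin n) : mpPow B m i j ≤ mpStar B i j := by
  induction m using Nat.strong_induction_on generalizing i j with
  | _ m ih =>
    by_cases hm : m < n
    · exact le_sup (f := fun m => mpPow B m i j) (mem_range.2 hm)
    · obtain ⟨m', hm', hle⟩ := exists_lt_mpPow_le_mpPow hB (not_lt.1 hm) i j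
      exact hle.trans (ih m' hm' i j)

end Cycles

section KleeneStar

variable {n : ℕ} {B : Fin n → Fin n → WithBot ℝ}

lemma add_mpStar_le (hB : mpLam B ≤ 0) (i j k : Fin n) :
    B i j + mpStar B j k ≤ mpStar B i k := by
  change B i j + (range n).sup (fun m => mpPow B m j k) ≤ _
  rw [WithBot.add_finsetSup]
  exact Finset.sup_le fun m _ =>
    (add_mpPow_le_mpPow_succ B m i j k).trans (mpPow_le_mpStar_s13 hB _ i k)

lemma coe_le_mpMulVec_mpStar (u : Fin n → ℝ) (i : Fin n) :
    (u i : WithBot ℝ) ≤ mpMulVec (mpStar B) (fun j => u j) i :=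
  calc (u i : WithBot ℝ) = mpPow B 0 i i + u i := by rw [mpPow_zero_apply_self, zero_add]
    _ ≤ mpStar B i i + u i :=
        add_le_add (le_sup (f := fun m => mpPow B m i i) (mem_range.2 i.pos)) le_rfl
    _ ≤ mpMulVec (mpStar B) (fun j => u j) i :=
        le_sup (f := fun j => mpStar B i j + (u j : WithBot ℝ)) (mem_univ i)

lemma add_mpMulVec_mpStar_le (hB : mpLam B ≤ 0) (u : Fin n → WithBot ℝ) (i j : Fin n) :
    B i j + mpMulVec (mpStar B) u j ≤ mpMulVec (mpStar B) u i := by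
  change B i j + univ.sup (fun k => mpStar B j k + u k) ≤ _
  rw [WithBot.add_finsetSup]
  refine Finset.sup_le fun k _ => ?_
  rw [← add_assoc]
  exact (add_le_add (add_mpStar_le hB i j k) le_rfl).trans
    (le_sup (f := fun k => mpStar B i k + u k) (mem_univ k))

end KleeneStar

section Objective

variable {n : ℕ} (A : Fin n → Fin n → WithBot ℝ)

lemma mpObj_le_coe_iff (y : Fin n → ℝ) (c : ℝ) :
    mpObj A (fun i => y i) ≤ c ↔ ∀ i j, mpShift A c i j + y j ≤ y i := by
  simp only [mpObj, Finset.sup_le_iff, mem_univ, true_implies, WithBot.map_coe, mpShift_apply]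
  refine forall₂_congr fun i j => ?_
  induction A i j with
  | bot => simp
  | coe a => norm_cast; constructor <;> intro <;> linarith

lemma mpPow_add_le_of_add_le {y : Fin n → WithBot ℝ} (h : ∀ i j, A i j + y j ≤ y i) (m : ℕ)
    (i j : Fin n) : mpPow A m i j + y j ≤ y i := by
  induction m generalizing i with
  | zero =>
    by_cases hij : i = j
    · rw [hij, mpPow_zero_apply_self, zero_add]
    · rw [mpPow_zero_apply_of_ne A hij, WithBot.bot_add]
      exact bot_le
  | succ m ih =>
    rw [mpPow_succ_apply, WithBot.finsetSup_add]
    refine Finset.sup_le fun k _ => ?_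
    rw [add_assoc]
    exact (add_le_add le_rfl (ih k)).trans (h i k)

lemma mpLam_nonpos_of_add_le (y : Fin n → ℝ) (h : ∀ i j, A i j + y j ≤ y i) : mpLam A ≤ 0 := by
  rw [← WithBot.coe_zero, mpLam_le_coe_iff]
  intro k _
  rw [mul_zero, WithBot.coe_zero]
  refine Finset.sup_le fun i _ =>
    (WithBot.add_le_add_iff_right (WithBot.coe_ne_bot (a := y i))).1 ?_
  rw [zero_add]
  exact mpPow_add_le_of_add_le A h k i i

lemma mpLam_le_mpObj (y : Fin n → ℝ) : mpLam A ≤ mpObj A (fun i => y i) :=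
  WithBot.forall_le_coe_iff_le.1 fun c hc =>
    (mpLam_mpShift_nonpos_iff A c).1 (mpLam_nonpos_of_add_le _ y ((mpObj_le_coe_iff A y c).1 hc))

end Objective

/-- If `A` has finite spectral radius `λ` and `x = (λ⁻¹A)* u` for a regular
`u ∈ ℝⁿ`, then `x` is regular and `x⁻ A x = λ`; hence the minimum of
`x⁻ A x` over regular vectors equals `λ`. -/
theorem maxplus_min_xAx (n : ℕ) (A : Fin n → Fin n → WithBot ℝ) (l : ℝ)
    (hl : mpLam A = (l : WithBot ℝ)) (u : Fin n → ℝ)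
    (x : Fin n → WithBot ℝ)
    (hx : x = mpMulVec (mpStar (fun i j => WithBot.map (fun a => a - l) (A i j)))
        (fun j => ((u j : ℝ) : WithBot ℝ))) :
    (∀ i : Fin n, x i ≠ ⊥) ∧ mpObj A x = ((l : ℝ) : WithBot ℝ) ∧
    IsLeast {v : WithBot ℝ | ∃ y : Fin n → WithBot ℝ,
        (∀ i, y i ≠ ⊥) ∧ v = mpObj A y} ((l : ℝ) : WithBot ℝ) := by
  have hB : mpLam (mpShift A l) ≤ 0 := (mpLam_mpShift_nonpos_iff A l).2 hl.le
  have hu : ∀ i, (u i : WithBot ℝ) ≤ x i := by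
    rw [hx]
    exact coe_le_mpMulVec_mpStar u
  have hsub : ∀ i j, mpShift A l i j + x j ≤ x i := by
    rw [hx]
    exact add_mpMulVec_mpStar_le hB _
  lift x to Fin n → ℝ using fun i => ne_bot_of_le_ne_bot WithBot.coe_ne_bot (hu i)
  have hobj : mpObj A (fun i => x i) = l :=
    le_antisymm ((mpObj_le_coe_iff A x l).2 hsub) (hl ▸ mpLam_le_mpObj A x)
  refine ⟨fun _ => WithBot.coe_ne_bot, hobj, ⟨_, fun _ => WithBot.coe_ne_bot, hobj.symm⟩, ?_⟩
  rintro v ⟨y, hy, rfl⟩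
  lift y to Fin n → ℝ using hy
  exact hl ▸ mpLam_le_mpObj A y
end
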